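/- arXiv:1608.05880 — 8 statements merged into one kernel-verified Lean document; each statement's English description precedes it below -/
import Mathlib

section
/- Let p be an odd prime, e ≥ 1, and let g be a primitive root modulo p^e (i.e. the multiplicative order of g modulo p^e is p^(e-1)(p-1)). Then for each integer c there is an integer c', unique modulo p^(e-1)(p-1), such that for all integers x: g^(x-1+c) - x ≡ -((g^(-1))^((p^(e+1)-x)-1+c') - (p^(e+1)-x)) (mod p^e), where g^(-1) denotes a multiplicative inverse of g modulo p^e. This c' is given by c' ≡ (p^(e-1)(p-3)+4)/2 - c (mod p^(e-1)(p-1)). -/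
/-- For `g` a primitive root modulo `p^e` (`p` an odd prime), for each `c` there is a
`c'`, unique modulo `p^(e-1)(p-1)`, with `f_g(x,c) = -f_{g⁻¹}(p^(e+1)-x, c')` for all `x`,
and `c' ≡ (p^(e-1)(p-3)+4)/2 - c (mod p^(e-1)(p-1))`. -/
theorem welch_primitive_root_symmetry (p : ℕ) (hp : p.Prime) (hodd : p ≠ 2)
    (e : ℕ) (he : 1 ≤ e) (g : ℤ)
    (u : (ZMod (p ^ e))ˣ) (hu : (u : ZMod (p ^ e)) = (g : ZMod (p ^ e)))
    (hprim : orderOf (g : ZMod (p ^ e)) = p ^ (e - 1) * (p - 1)) :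
    ∀ c : ℤ, ∃ c' : ℤ,
      (∀ x : ℤ,
        (↑(u ^ (x - 1 + c)) : ZMod (p ^ e)) - (x : ZMod (p ^ e)) =
          -((↑(u⁻¹ ^ (((p : ℤ) ^ (e + 1) - x) - 1 + c')) : ZMod (p ^ e)) -
            (((p : ℤ) ^ (e + 1) - x : ℤ) : ZMod (p ^ e)))) ∧
      (∀ c'' : ℤ,
        (∀ x : ℤ,
          (↑(u ^ (x - 1 + c)) : ZMod (p ^ e)) - (x : ZMod (p ^ e)) =
            -((↑(u⁻¹ ^ (((p : ℤ) ^ (e + 1) - x) - 1 + c'')) : ZMod (p ^ e)) -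
              (((p : ℤ) ^ (e + 1) - x : ℤ) : ZMod (p ^ e)))) →
        c'' ≡ c' [ZMOD ((p : ℤ) ^ (e - 1) * ((p : ℤ) - 1))]) ∧
      c' ≡ ((p : ℤ) ^ (e - 1) * ((p : ℤ) - 3) + 4) / 2 - c
        [ZMOD ((p : ℤ) ^ (e - 1) * ((p : ℤ) - 1))] := by
  intro c
  haveI : NeZero (p ^ e) := ⟨pow_ne_zero e hp.ne_zero⟩
  have hp3 : 3 ≤ p := by
    have := hp.two_le; omega
  have hp2 : p % 2 = 1 := hp.eq_two_or_odd.resolve_left hodd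
  set n : ℕ := p ^ (e - 1) * (p - 1) with hn_def
  have hordu : orderOf u = n := by
    rw [← orderOf_units, hu, hprim]
  have hcard : Fintype.card (ZMod (p ^ e))ˣ = n := by
    rw [ZMod.card_units_eq_totient, Nat.totient_prime_pow hp (by omega)]
  have htop : Subgroup.zpowers u = ⊤ := by
    apply Subgroup.eq_top_of_card_eq
    rw [Nat.card_zpowers, hordu, Nat.card_eq_fintype_card, hcard]
  obtain ⟨k, hk⟩ : ∃ k : ℤ, u ^ k = -1 := by
    have h1 : (-1 : (ZMod (p ^ e))ˣ) ∈ Subgroup.zpowers u := by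
      rw [htop]; exact Subgroup.mem_top _
    exact Subgroup.mem_zpowers_iff.mp h1
  have hneg_ne : (-1 : (ZMod (p ^ e))ˣ) ≠ 1 := by
    intro h
    have h1 : (-1 : ZMod (p ^ e)) = 1 := by
      have := congrArg Units.val h
      simpa using this
    have h2 : ((2 : ℕ) : ZMod (p ^ e)) = 0 := by
      push_cast
      linear_combination -h1
    have h3 : p ^ e ∣ 2 := (ZMod.natCast_eq_zero_iff 2 (p ^ e)).mp h2
    have h4 : p ≤ p ^ e := Nat.le_self_pow (by omega) p
    have := Nat.le_of_dvd (by norm_num) h3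
    omega
  set m : ℕ := p ^ (e - 1) * ((p - 1) / 2) with hm_def
  have h2m : 2 * m = n := by
    rw [hm_def, hn_def]
    have h5 : 2 * ((p - 1) / 2) = p - 1 := by omega
    rw [← mul_assoc, mul_comm 2 (p ^ (e - 1)), mul_assoc, h5]
  have hnZ : ((n : ℕ) : ℤ) = (p : ℤ) ^ (e - 1) * ((p : ℤ) - 1) := by
    rw [hn_def]
    push_cast [Nat.cast_sub hp.one_lt.le]
    ring
  have h2mZ : 2 * ((m : ℕ) : ℤ) = ((n : ℕ) : ℤ) := by
    exact_mod_cast congrArg (Nat.cast : ℕ → ℤ) h2m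
  have hun : u ^ ((n : ℕ) : ℤ) = 1 := by
    rw [zpow_natCast, ← hordu, pow_orderOf_eq_one]
  have hm : u ^ ((m : ℕ) : ℤ) = -1 := by
    have h2k : ((n : ℕ) : ℤ) ∣ 2 * k := by
      rw [← hordu]
      apply orderOf_dvd_iff_zpow_eq_one.mpr
      rw [mul_comm, zpow_mul, hk,
        show (2:ℤ) = ((2:ℕ):ℤ) by norm_num, zpow_natCast]
      exact neg_one_sq
    obtain ⟨t, ht⟩ : ((m : ℕ) : ℤ) ∣ k := by
      have h2 : (2 : ℤ) * (m : ℤ) ∣ 2 * k := by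
        rw [h2mZ]; exact h2k
      exact (mul_dvd_mul_iff_left (two_ne_zero)).mp h2
    rcases Int.even_or_odd t with ⟨s, hs⟩ | ⟨s, hs⟩
    · exfalso
      apply hneg_ne
      rw [← hk, ht, hs]
      have h1 : ((m : ℕ) : ℤ) * (s + s) = ((n : ℕ) : ℤ) * s := by
        linear_combination s * h2mZ
      rw [h1, zpow_mul, hun, one_zpow]
    · have h1 : ((m : ℕ) : ℤ) * t = ((n : ℕ) : ℤ) * s + (m : ℤ) := by
        rw [hs]
        linear_combination s * h2mZ
      rw [← hk, ht, h1, zpow_add, zpow_mul, hun, one_zpow, one_mul]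
  have hp0 : ((p : ZMod (p ^ e))) ^ (e + 1) = 0 := by
    rw [← Nat.cast_pow]
    exact (ZMod.natCast_eq_zero_iff _ _).mpr (pow_dvd_pow p (by omega))
  have key : ∀ d x : ℤ,
      ((↑(u ^ (x - 1 + c)) : ZMod (p ^ e)) - (x : ZMod (p ^ e)) =
        -((↑(u⁻¹ ^ (((p : ℤ) ^ (e + 1) - x) - 1 + d)) : ZMod (p ^ e)) -
          (((p : ℤ) ^ (e + 1) - x : ℤ) : ZMod (p ^ e)))) ↔
      u ^ (c + d - 2 + (p : ℤ) ^ (e + 1)) = -1 := by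
    intro d x
    have hPx : (((p : ℤ) ^ (e + 1) - x : ℤ) : ZMod (p ^ e)) = -(x : ZMod (p ^ e)) := by
      push_cast
      rw [hp0]
      ring
    rw [inv_zpow, ← zpow_neg, hPx]
    have hsplit : u ^ (x - 1 + c) =
        u ^ (-(((p : ℤ) ^ (e + 1) - x) - 1 + d)) * u ^ (c + d - 2 + (p : ℤ) ^ (e + 1)) := by
      rw [← zpow_add]; congr 1; ring
    rw [hsplit, Units.val_mul]
    set v := u ^ (-(((p : ℤ) ^ (e + 1) - x) - 1 + d)) with hv
    constructor
    · intro h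
      have h' : (v : ZMod (p ^ e)) * ↑(u ^ (c + d - 2 + (p : ℤ) ^ (e + 1))) = ↑(-v) := by
        rw [Units.val_neg]
        linear_combination h
      have h2 : v * u ^ (c + d - 2 + (p : ℤ) ^ (e + 1)) = -v := by
        apply Units.ext
        rw [Units.val_mul]
        exact h'
      have h3 : v * u ^ (c + d - 2 + (p : ℤ) ^ (e + 1)) = v * (-1) := by
        rw [mul_neg_one]; exact h2
      exact mul_left_cancel h3
    · intro h
      rw [h, Units.val_neg, Units.val_one]
      ring
  refine ⟨(m : ℤ) + 2 - (p : ℤ) ^ (e + 1) - c, ?_, ?_, ?_⟩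
  · intro x
    rw [key]
    have h1 : c + ((m : ℤ) + 2 - (p : ℤ) ^ (e + 1) - c) - 2 + (p : ℤ) ^ (e + 1)
        = ((m : ℕ) : ℤ) := by ring
    rw [h1]
    exact hm
  · intro c'' h
    have h1 := (key c'' 1).mp (h 1)
    have hd : ((n : ℕ) : ℤ) ∣ (c + c'' - 2 + (p : ℤ) ^ (e + 1)) - (m : ℤ) := by
      rw [← hordu]
      apply orderOf_dvd_iff_zpow_eq_one.mpr
      rw [zpow_sub, h1, hm]
      simp
    rw [Int.modEq_iff_dvd, ← hnZ]
    have heq : ((m : ℤ) + 2 - (p : ℤ) ^ (e + 1) - c) - c'' =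
        -((c + c'' - 2 + (p : ℤ) ^ (e + 1)) - (m : ℤ)) := by ring
    rw [heq]
    exact dvd_neg.mpr hd
  · have hdiv : ((p : ℤ) ^ (e - 1) * ((p : ℤ) - 3) + 4) / 2
        = (m : ℤ) - (p : ℤ) ^ (e - 1) + 2 := by
      have h1 : (p : ℤ) ^ (e - 1) * ((p : ℤ) - 3) + 4
          = 2 * ((m : ℤ) - (p : ℤ) ^ (e - 1) + 2) := by
        have := h2mZ
        rw [hnZ] at this
        linear_combination -this
      rw [h1, Int.mul_ediv_cancel_left _ two_ne_zero]
    rw [hdiv, Int.modEq_iff_dvd]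
    refine ⟨(p : ℤ) + 1, ?_⟩
    have hee : e + 1 = (e - 1) + 2 := by omega
    rw [hee]
    ring
end

section
/- Let p be an odd prime, e ≥ 1, and let g be a primitive root modulo p^e with multiplicative inverse g^(-1) modulo p^e. Suppose the pair (x, c) of integers satisfies g^(x-1+c) ≡ x (mod p^e). Then the pair (p^e - x, c') satisfies (g^(-1))^((p^e-x)-1+c') ≡ p^e - x (mod p^e), where c' ≡ (p^(e-1)(p-3)+4)/2 - c (mod p^(e-1)(p-1)). -/
/-- For `g` a primitive root modulo `p^e` (`p` an odd prime), if `(x,c)` solves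
`g^(x-1+c) ≡ x (mod p^e)`, then `(p^e - x, c')` solves
`(g⁻¹)^((p^e-x)-1+c') ≡ p^e - x (mod p^e)`, where
`c' ≡ (p^(e-1)(p-3)+4)/2 - c (mod p^(e-1)(p-1))`. -/
theorem welch_inverse_pair (p : ℕ) (hp : p.Prime) (hodd : p ≠ 2)
    (e : ℕ) (he : 1 ≤ e) (g : ℤ)
    (u : (ZMod (p ^ e))ˣ) (hu : (u : ZMod (p ^ e)) = (g : ZMod (p ^ e)))
    (hprim : orderOf (g : ZMod (p ^ e)) = p ^ (e - 1) * (p - 1))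
    (x c : ℤ) (hsol : (↑(u ^ (x - 1 + c)) : ZMod (p ^ e)) = (x : ZMod (p ^ e))) :
    ∀ c' : ℤ,
      c' ≡ ((p : ℤ) ^ (e - 1) * ((p : ℤ) - 3) + 4) / 2 - c
          [ZMOD ((p : ℤ) ^ (e - 1) * ((p : ℤ) - 1))] →
      (↑(u⁻¹ ^ (((p : ℤ) ^ e - x) - 1 + c')) : ZMod (p ^ e)) =
        (((p : ℤ) ^ e - x : ℤ) : ZMod (p ^ e)) := by
  intro c' hc'
  haveI : NeZero (p ^ e) := ⟨pow_ne_zero e hp.ne_zero⟩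
  have hp3 : 3 ≤ p := by
    rcases hp.two_le.lt_or_eq with h | h
    · omega
    · omega
  -- order of u
  have hordu : orderOf u = p ^ (e - 1) * (p - 1) := by
    rw [← orderOf_units, hu, hprim]
  -- cast of the order
  have hcast : ((p ^ (e - 1) * (p - 1) : ℕ) : ℤ) = (p : ℤ) ^ (e - 1) * ((p : ℤ) - 1) := by
    push_cast [Nat.cast_sub hp.one_le]
    ring
  -- u generates
  have hcard : Nat.card (ZMod (p ^ e))ˣ = p ^ (e - 1) * (p - 1) := by
    rw [Nat.card_eq_fintype_card, ZMod.card_units_eq_totient, Nat.totient_prime_pow hp he]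
  have htop : Subgroup.zpowers u = ⊤ :=
    Subgroup.eq_top_of_card_eq _ (by rw [Nat.card_zpowers, hordu, hcard])
  have hmem : (-1 : (ZMod (p ^ e))ˣ) ∈ Subgroup.zpowers u := by rw [htop]; trivial
  obtain ⟨k, hk⟩ := Subgroup.mem_zpowers_iff.mp hmem
  -- half the order
  obtain ⟨mZ, hmZ⟩ : (2 : ℤ) ∣ (p : ℤ) ^ (e - 1) * ((p : ℤ) - 1) := by
    obtain ⟨r, hr⟩ := hp.odd_of_ne_two hodd
    exact Dvd.dvd.mul_left ⟨(r : ℤ), by push_cast [hr]; ring⟩ _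
  -- -1 ≠ 1 in the units
  haveI : Fact (2 < p ^ e) := ⟨lt_of_lt_of_le (by omega) (Nat.le_self_pow (by omega) p)⟩
  have hne : (-1 : (ZMod (p ^ e))ˣ) ≠ 1 := by
    intro h
    have := congrArg (Units.val) h
    simp only [Units.val_neg, Units.val_one] at this
    exact ZMod.neg_one_ne_one this
  -- u ^ n = 1
  have hun : u ^ (mZ * 2) = 1 := by
    rw [← orderOf_dvd_iff_zpow_eq_one, hordu, hcast, hmZ]
    exact ⟨1, by ring⟩
  -- order divides 2k
  have hdvd2k : ((p : ℤ) ^ (e - 1) * ((p : ℤ) - 1)) ∣ k * 2 := by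
    rw [← hcast, ← hordu, orderOf_dvd_iff_zpow_eq_one, show k * 2 = k + k by ring,
      zpow_add, hk]
    simp
  have hmk : mZ ∣ k := by
    rw [hmZ] at hdvd2k
    obtain ⟨t, ht⟩ := hdvd2k
    exact ⟨t, mul_right_cancel₀ two_ne_zero (by linear_combination ht)⟩
  obtain ⟨t, rfl⟩ := hmk
  -- u ^ mZ = -1
  have hum : u ^ mZ = -1 := by
    rcases Int.even_or_odd t with ⟨s, rfl⟩ | ⟨s, rfl⟩
    · exfalso
      apply hne
      rw [← hk, show mZ * (s + s) = mZ * 2 * s by ring, zpow_mul, hun, one_zpow]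
    · rw [← hk, show mZ * (2 * s + 1) = mZ * 2 * s + mZ by ring, zpow_add, zpow_mul, hun,
        one_zpow, one_mul]
  -- the exponent congruence
  obtain ⟨j, hj⟩ := hc'.symm.dvd
  have heq2 : 2 * ((x - 1 + c + mZ) - (-(((p : ℤ) ^ e - x) - 1 + c'))) =
      2 * (((p : ℤ) ^ (e - 1) * ((p : ℤ) - 1)) * (2 + j)) := by
    have hK2 : 2 * (((p : ℤ) ^ (e - 1) * ((p : ℤ) - 3) + 4) / 2) =
        (p : ℤ) ^ (e - 1) * ((p : ℤ) - 3) + 4 := by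
      apply Int.mul_ediv_cancel'
      obtain ⟨r, hr⟩ := hp.odd_of_ne_two hodd
      refine dvd_add (Dvd.dvd.mul_left ⟨(r : ℤ) - 1, by push_cast [hr]; ring⟩ _) ⟨2, by ring⟩
    have hpe : (p : ℤ) ^ e = (p : ℤ) ^ (e - 1) * (p : ℤ) := by
      conv_lhs => rw [show e = (e - 1) + 1 by omega]
      rw [pow_succ]
    linear_combination (2 : ℤ) * hj + hK2 - hmZ + 2 * hpe
  have heq : (x - 1 + c + mZ) - (-(((p : ℤ) ^ e - x) - 1 + c')) =
      ((p : ℤ) ^ (e - 1) * ((p : ℤ) - 1)) * (2 + j) :=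
    mul_left_cancel₀ two_ne_zero heq2
  have hmod : -(((p : ℤ) ^ e - x) - 1 + c') ≡ (x - 1 + c) + mZ
      [ZMOD ((p : ℤ) ^ (e - 1) * ((p : ℤ) - 1))] :=
    Int.ModEq.symm (Int.modEq_iff_dvd.mpr (by rw [heq]; exact ⟨2 + j, rfl⟩)).symm
  have key : u ^ (-(((p : ℤ) ^ e - x) - 1 + c')) = u ^ ((x - 1 + c) + mZ) := by
    rw [zpow_eq_zpow_iff_modEq, hordu, hcast]
    exact hmod
  have hfin : u⁻¹ ^ (((p : ℤ) ^ e - x) - 1 + c') = u ^ (x - 1 + c) * u ^ mZ := by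
    rw [inv_zpow, ← zpow_neg, key, zpow_add]
  rw [hfin, Units.val_mul, hsol, hum]
  have hrhs : (((p : ℤ) ^ e - x : ℤ) : ZMod (p ^ e)) = -(x : ZMod (p ^ e)) := by
    push_cast
    rw [show ((p : ZMod (p ^ e)) ^ e) = ((p ^ e : ℕ) : ZMod (p ^ e)) by push_cast; ring,
      ZMod.natCast_self]
    ring
  rw [hrhs]
  simp
end

section
/- Let p be an odd prime, e ≥ 1, g an integer not divisible by p, and m the multiplicative order of g modulo p. Suppose x₀ is a unit modulo p and the pair (x₀, c₀) of integers satisfies g^(x₀-1+c₀) ≡ x₀ (mod p^e). Then for every integer n ≥ 0, setting xₙ = x₀ + n·p^e and cₙ = c₀ - n·p^(e-1), one has g^(xₙ-1+cₙ) ≡ x₀ (mod p^e); i.e. cₙ ≡ c₀ - n·p^(e-1) (mod m·p^(e-1)) solves g^(xₙ-1+c) ≡ x₀ (mod p^e). -/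
/-- If `(x₀, c₀)` solves the Welch equation modulo `p^e` with `x₀` a unit modulo `p`,
then for every `n ≥ 0`, the pair `(x₀ + n·p^e, c₀ - n·p^(e-1))` also yields
`g^(xₙ-1+cₙ) ≡ x₀ (mod p^e)`. -/
theorem welch_shifted_solutions (p : ℕ) (hp : p.Prime) (hodd : p ≠ 2)
    (e : ℕ) (he : 1 ≤ e) (g : ℤ) (hg : ¬ (p : ℤ) ∣ g)
    (m : ℕ) (hm : m = orderOf (g : ZMod p))
    (u : (ZMod (p ^ e))ˣ) (hu : (u : ZMod (p ^ e)) = (g : ZMod (p ^ e)))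
    (x₀ c₀ : ℤ) (hx₀ : ¬ (p : ℤ) ∣ x₀)
    (hsol : (↑(u ^ (x₀ - 1 + c₀)) : ZMod (p ^ e)) = (x₀ : ZMod (p ^ e))) :
    ∀ n : ℕ,
      (↑(u ^ ((x₀ + (n : ℤ) * (p : ℤ) ^ e) - 1 + (c₀ - (n : ℤ) * (p : ℤ) ^ (e - 1)))) :
          ZMod (p ^ e)) =
        (x₀ : ZMod (p ^ e)) := by
  intro n
  haveI : NeZero (p ^ e) := ⟨pow_ne_zero e hp.ne_zero⟩
  haveI : Fact p.Prime := ⟨hp⟩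
  have hcard : Fintype.card (ZMod (p ^ e))ˣ = (p ^ e).totient :=
    ZMod.card_units_eq_totient _
  have h1 : u ^ (((p ^ e).totient : ℤ)) = 1 := by
    rw [zpow_natCast, ← hcard]; exact pow_card_eq_one
  have htot : (((p ^ e).totient : ℤ)) = (p : ℤ) ^ e - (p : ℤ) ^ (e - 1) := by
    rw [Nat.totient_prime_pow hp (by omega : 0 < e)]
    have hp1 : 1 ≤ p := hp.one_lt.le
    push_cast [hp1]
    have : (p : ℤ) ^ (e - 1) * (p : ℤ) = (p : ℤ) ^ e := by
      rw [← pow_succ]; congr 1; omega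
    ring_nf
    nlinarith [this]
  have hexp : (x₀ + (n : ℤ) * (p : ℤ) ^ e) - 1 + (c₀ - (n : ℤ) * (p : ℤ) ^ (e - 1)) =
      (x₀ - 1 + c₀) + (n : ℤ) * (((p ^ e).totient : ℤ)) := by
    rw [htot]; ring
  rw [hexp, zpow_add, mul_comm (n : ℤ), zpow_mul, h1, one_zpow, mul_one, hsol]
end

section
/- Let p be an odd prime, e ≥ 1, g an integer not divisible by p, m the multiplicative order of g modulo p, and fix an integer c. Then the congruence g^(x-1+c) ≡ x (mod p^e) has exactly m solutions x in {1, 2, ..., p^e·m}; moreover these m solutions are pairwise distinct modulo m and each is relatively prime to p. -/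
/-! If two values of `x ↦ (x mod m, x - g ^ (x - 1 + c) mod p ^ e)` agree and `m p ^ s ∣ x - y`,
then `g ^ (m p ^ s) ≡ 1 mod p ^ (s + 1)` gives `g ^ x ≡ g ^ y`, hence `x ≡ y mod p ^ (s + 1)`; since
`p ∤ m` (as `m ∣ p - 1`) this upgrades to `m p ^ (s + 1) ∣ x - y`. So the map is injective on
`m p ^ e` consecutive integers, hence by counting a bijection onto `ℤ/m × ℤ/p^e`, and the solutions
of the Welch equation are exactly the preimages of `ℤ/m × {0}`. They are prime to `p` because `x`
is congruent to a unit modulo `p ^ e`. -/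

theorem mul_pow_dvd_sub_of_contracting {f : ℤ → ℤ} {m q : ℤ} {e : ℕ} (hmq : IsCoprime m q)
    (hf : ∀ s < e, ∀ x y, m * q ^ s ∣ x - y → q ^ (s + 1) ∣ f x - f y)
    {x y : ℤ} (hm : m ∣ x - y) (hq : q ^ e ∣ (x - f x) - (y - f y)) : m * q ^ e ∣ x - y := by
  suffices ∀ s ≤ e, m * q ^ s ∣ x - y from this e le_rfl
  intro s hs
  induction s with
  | zero => simpa using hm
  | succ s ih =>
    have hfs : q ^ (s + 1) ∣ f x - f y := hf s hs x y (ih (by omega))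
    have hqs : q ^ (s + 1) ∣ x - y := by
      rw [show x - y = ((x - f x) - (y - f y)) + (f x - f y) by ring]
      exact dvd_add ((pow_dvd_pow q hs).trans hq) hfs
    exact hmq.pow_right.mul_dvd hm hqs

theorem Int.eq_of_dvd_sub_of_mem_Icc {N x y : ℤ} (hx : x ∈ Set.Icc 1 N) (hy : y ∈ Set.Icc 1 N)
    (h : N ∣ x - y) : x = y := by
  have := Int.eq_zero_of_abs_lt_dvd h <| by
    rw [abs_lt]
    constructor <;> linarith [hx.1, hx.2, hy.1, hy.2]
  linarith

theorem Nat.isCoprime_of_dvd_sub_one {m p : ℕ} (hp : 1 ≤ p) (h : m ∣ p - 1) :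
    IsCoprime (m : ℤ) p :=
  Nat.isCoprime_iff_coprime.mpr <|
    ((Nat.coprime_self_sub_left hp).mpr (Nat.coprime_one_left p)).coprime_dvd_left h

theorem intCast_dvd_pow_orderOf_sub_one (n : ℕ) (g : ℤ) :
    (n : ℤ) ∣ g ^ orderOf (g : ZMod n) - 1 := by
  refine (ZMod.intCast_eq_intCast_iff_dvd_sub 1 _ n).mp ?_
  push_cast
  exact (pow_orderOf_eq_one _).symm

theorem intCast_pow_mul_pow_eq_one {p m : ℕ} {g : ℤ} (hg : (p : ℤ) ∣ g ^ m - 1) (s : ℕ) :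
    (g : ZMod (p ^ (s + 1))) ^ (m * p ^ s) = 1 := by
  have h := dvd_sub_pow_of_dvd_sub hg s
  rw [one_pow, ← pow_mul] at h
  rw [← sub_eq_zero]
  exact_mod_cast (ZMod.intCast_zmod_eq_zero_iff_dvd _ _).mpr (by exact_mod_cast h)

theorem pow_succ_dvd_val_zpow_sub_val_zpow {p e s m : ℕ} [NeZero p] (hs : s < e) {g : ℤ}
    (hg : (p : ℤ) ∣ g ^ m - 1) {u : (ZMod (p ^ e))ˣ} (hu : (u : ZMod (p ^ e)) = g) {a b : ℤ}
    (hab : (m * p ^ s : ℤ) ∣ a - b) :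
    (p : ℤ) ^ (s + 1) ∣ ((u ^ a : (ZMod (p ^ e))ˣ) : ZMod (p ^ e)).val -
      ((u ^ b : (ZMod (p ^ e))ˣ) : ZMod (p ^ e)).val := by
  let π := Units.map (ZMod.castHom (pow_dvd_pow p hs) (ZMod (p ^ (s + 1)))).toMonoidHom
  have hπu : π u ^ (m * p ^ s) = 1 := Units.ext <| by
    simp [π, hu, intCast_pow_mul_pow_eq_one hg s]
  have hπ : π u ^ b = π u ^ a := by
    rw [zpow_eq_zpow_iff_modEq, Int.modEq_iff_dvd]
    exact (Int.natCast_dvd_natCast.mpr (orderOf_dvd_of_pow_eq_one hπu)).trans (by exact_mod_cast hab)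
  have hval (z : ℤ) : ((((u ^ z : (ZMod (p ^ e))ˣ) : ZMod (p ^ e)).val : ℤ) : ZMod (p ^ (s + 1)))
      = ((π u ^ z : (ZMod (p ^ (s + 1)))ˣ) : ZMod (p ^ (s + 1))) := by
    rw [Int.cast_natCast, ZMod.natCast_val, ← map_zpow]
    rfl
  rw [← Nat.cast_pow, ← ZMod.intCast_eq_intCast_iff_dvd_sub, hval, hval, hπ]

theorem Int.gcd_eq_one_of_isUnit_zmod_pow {p e : ℕ} (he : e ≠ 0) {x : ℤ}
    (hx : IsUnit (x : ZMod (p ^ e))) :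
    Int.gcd x p = 1 := by
  rw [ZMod.coe_int_isUnit_iff_isCoprime, Nat.cast_pow, IsCoprime.pow_left_iff (by omega)] at hx
  exact Int.isCoprime_iff_gcd_eq_one.mp hx.symm

def welchMap {p e : ℕ} (m : ℕ) (u : (ZMod (p ^ e))ˣ) (c : ℤ) (x : ℤ) : ZMod m × ZMod (p ^ e) :=
  ((x : ZMod m), (x : ZMod (p ^ e)) - ↑(u ^ (x - 1 + c)))

section Welch

variable {p e : ℕ} [NeZero p] (m : ℕ) (u : (ZMod (p ^ e))ˣ) (c : ℤ) {g : ℤ}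

theorem welchMap_injOn (hmp : IsCoprime (m : ℤ) p) (hg : (p : ℤ) ∣ g ^ m - 1)
    (hu : (u : ZMod (p ^ e)) = g) : Set.InjOn (welchMap m u c) (Set.Icc 1 ((p : ℤ) ^ e * m)) := by
  intro x hx y hy hxy
  obtain ⟨hm, hq⟩ := Prod.ext_iff.mp hxy
  let f : ℤ → ℤ := fun x ↦ ((u ^ (x - 1 + c) : (ZMod (p ^ e))ˣ) : ZMod (p ^ e)).val
  have hf (s : ℕ) (hs : s < e) (x y : ℤ) (h : (m : ℤ) * p ^ s ∣ x - y) :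
      (p : ℤ) ^ (s + 1) ∣ f x - f y :=
    pow_succ_dvd_val_zpow_sub_val_zpow hs hg hu
      (by rwa [show x - 1 + c - (y - 1 + c) = x - y by ring])
  have hcast (x : ℤ) : ((x - f x : ℤ) : ZMod (p ^ e)) = (welchMap m u c x).2 := by
    simp [f, welchMap]
  have hm' : (m : ℤ) ∣ x - y := (ZMod.intCast_eq_intCast_iff_dvd_sub y x m).mp hm.symm
  have hq' : ((p ^ e : ℕ) : ℤ) ∣ (x - f x) - (y - f y) :=
    (ZMod.intCast_eq_intCast_iff_dvd_sub _ _ _).mp (by rw [hcast, hcast, hq])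
  have hdvd := mul_pow_dvd_sub_of_contracting hmp hf hm' (by exact_mod_cast hq')
  exact Int.eq_of_dvd_sub_of_mem_Icc hx hy (by rwa [mul_comm] at hdvd)

theorem welchMap_surjOn [NeZero m] (hmp : IsCoprime (m : ℤ) p) (hg : (p : ℤ) ∣ g ^ m - 1)
    (hu : (u : ZMod (p ^ e)) = g) :
    Set.SurjOn (welchMap m u c) (Set.Icc 1 ((p : ℤ) ^ e * m)) Set.univ := by
  have h := Finset.surjOn_of_injOn_of_card_le (welchMap m u c) (t := Finset.univ)
    (s := Finset.Icc 1 ((p : ℤ) ^ e * m)) (fun _ _ ↦ Finset.mem_univ _)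
    (by simpa using welchMap_injOn m u c hmp hg hu) (by
      rw [show (p : ℤ) ^ e * m = ((m * p ^ e : ℕ) : ℤ) by push_cast; ring]
      simp only [Finset.card_univ, Fintype.card_prod, ZMod.card, Int.card_Icc, add_sub_cancel_right,
        Int.toNat_natCast, le_refl])
  simpa using h

end Welch

theorem welch_count_fixed_c_general (p : ℕ) (hp : p.Prime)
    (e : ℕ) (he : 1 ≤ e) (g : ℤ) (hg : ¬ (p : ℤ) ∣ g)
    (m : ℕ) (hm : m = orderOf (g : ZMod p))
    (u : (ZMod (p ^ e))ˣ) (hu : (u : ZMod (p ^ e)) = (g : ZMod (p ^ e)))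
    (c : ℤ) (S : Set ℤ)
    (hS : S = {x : ℤ | 1 ≤ x ∧ x ≤ (p : ℤ) ^ e * m ∧
      (↑(u ^ (x - 1 + c)) : ZMod (p ^ e)) = (x : ZMod (p ^ e))}) :
    S.ncard = m ∧
    (∀ x ∈ S, ∀ y ∈ S, x ≡ y [ZMOD (m : ℤ)] → x = y) ∧
    (∀ x ∈ S, Int.gcd x p = 1) := by
  have : Fact p.Prime := ⟨hp⟩
  have : NeZero p := ⟨hp.ne_zero⟩
  have hdvd : m ∣ p - 1 :=
    hm ▸ ZMod.orderOf_dvd_card_sub_one (by rwa [Ne, ZMod.intCast_zmod_eq_zero_iff_dvd])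
  have : NeZero m := ⟨fun h ↦ by rw [h, zero_dvd_iff] at hdvd; have := hp.one_lt; omega⟩
  have hmp := Nat.isCoprime_of_dvd_sub_one hp.one_lt.le hdvd
  have hgm : (p : ℤ) ∣ g ^ m - 1 := hm ▸ intCast_dvd_pow_orderOf_sub_one p g
  have hS' : S = Set.Icc 1 ((p : ℤ) ^ e * m) ∩ {x | (welchMap m u c x).2 = 0} := by
    ext x
    simp [hS, welchMap, sub_eq_zero, eq_comm, and_assoc]
  have hinj : Set.InjOn (fun x : ℤ ↦ (x : ZMod m)) S := fun x hx y hy hxy ↦ by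
    rw [hS'] at hx hy
    exact welchMap_injOn m u c hmp hgm hu hx.1 hy.1 (Prod.ext hxy (hx.2.trans hy.2.symm))
  refine ⟨?_, fun x hx y hy hxy ↦ hinj hx hy ((ZMod.intCast_eq_intCast_iff _ _ _).mpr hxy), ?_⟩
  · have himage : (fun x : ℤ ↦ (x : ZMod m)) '' S = Set.univ := by
      refine Set.eq_univ_of_forall fun r ↦ ?_
      obtain ⟨x, hx, hxr⟩ := welchMap_surjOn m u c hmp hgm hu (Set.mem_univ (r, 0))
      exact ⟨x, hS' ▸ ⟨hx, congrArg Prod.snd hxr⟩, congrArg Prod.fst hxr⟩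
    rw [← hinj.ncard_image, himage, Set.ncard_univ, Nat.card_zmod]
  · intro x hx
    rw [hS] at hx
    exact Int.gcd_eq_one_of_isUnit_zmod_pow (by omega) (hx.2.2 ▸ Units.isUnit _)

/-- For fixed `c`, the Welch equation `g^(x-1+c) ≡ x (mod p^e)` has exactly `m`
solutions `x ∈ {1, …, p^e·m}`, pairwise distinct modulo `m` and coprime to `p`. -/
theorem welch_count_fixed_c (p : ℕ) (hp : p.Prime) (hodd : p ≠ 2)
    (e : ℕ) (he : 1 ≤ e) (g : ℤ) (hg : ¬ (p : ℤ) ∣ g)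
    (m : ℕ) (hm : m = orderOf (g : ZMod p))
    (u : (ZMod (p ^ e))ˣ) (hu : (u : ZMod (p ^ e)) = (g : ZMod (p ^ e)))
    (c : ℤ) (S : Set ℤ)
    (hS : S = {x : ℤ | 1 ≤ x ∧ x ≤ (p : ℤ) ^ e * m ∧
      (↑(u ^ (x - 1 + c)) : ZMod (p ^ e)) = (x : ZMod (p ^ e))}) :
    S.ncard = m ∧
    (∀ x ∈ S, ∀ y ∈ S, x ≡ y [ZMOD (m : ℤ)] → x = y) ∧
    (∀ x ∈ S, Int.gcd x p = 1) :=
  welch_count_fixed_c_general p hp e he g hg m hm u hu c S hS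
end

section
/- Let p be an odd prime, e ≥ 1, g an integer not divisible by p, m the multiplicative order of g modulo p, k ≥ 1 an integer, and fix an integer c. Then the congruence g^(x-1+c) ≡ x (mod p^e) has exactly k·m solutions x in {1, 2, ..., p^e·k·m}, each relatively prime to p. -/
section WelchAux

private lemma welch_aux_dvd_small {n a : ℤ} (h : n ∣ a) (h0 : 0 < n) (h1 : -n < a) (h2 : a < n) :
    a = 0 :=
  Int.eq_zero_of_abs_lt_dvd h (abs_lt.mpr ⟨h1, h2⟩)

private lemma welch_aux_exu_t (p : ℕ) (hp : p.Prime) (m : ℕ) (hpm : ¬ (p:ℤ) ∣ (m:ℤ)) (a : ℤ) :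
    ∃! t : ℤ, 0 ≤ t ∧ t < (p:ℤ) ∧ (p:ℤ) ∣ (a - t * (m:ℤ)) := by
  haveI : Fact p.Prime := ⟨hp⟩
  have hm0 : ((m:ℕ) : ZMod p) ≠ 0 := by
    intro h
    exact hpm (by exact_mod_cast ((ZMod.natCast_eq_zero_iff _ _).mp h))
  set T : ZMod p := (a : ZMod p) * ((m:ℕ) : ZMod p)⁻¹ with hT
  have hkey : (p:ℤ) ∣ (a - (T.val : ℤ) * m) := by
    rw [← ZMod.intCast_zmod_eq_zero_iff_dvd]
    push_cast
    rw [ZMod.natCast_val, ZMod.cast_id, hT, mul_assoc, inv_mul_cancel₀ hm0, mul_one, sub_self]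
  refine ⟨(T.val : ℤ), ⟨by positivity, by exact_mod_cast ZMod.val_lt T, hkey⟩, ?_⟩
  rintro t' ⟨h0, h1, h2⟩
  have h3 : (p:ℤ) ∣ (t' - (T.val:ℤ)) * m := by
    have hsub := dvd_sub hkey h2
    have he : (a - (T.val:ℤ)*m) - (a - t'*m) = (t' - (T.val:ℤ)) * m := by ring
    rw [he] at hsub
    exact hsub
  have h4 : (p:ℤ) ∣ (t' - T.val) := by
    rcases (Int.Prime.dvd_mul' hp h3) with h | h
    · exact h
    · exact absurd h hpm
  have hp0 : (0:ℤ) < p := by exact_mod_cast hp.pos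
  have htlt : ((T.val:ℤ)) < (p:ℤ) := by exact_mod_cast ZMod.val_lt T
  have ht0 : (0:ℤ) ≤ T.val := by positivity
  have := welch_aux_dvd_small h4 hp0 (by omega) (by omega)
  omega

private lemma welch_aux_uniq (p : ℕ) (hp : p.Prime) (e m : ℕ) (hm : 0 < m)
    (hpm : ¬ (p:ℤ) ∣ (m:ℤ)) (G : ℤ → ℤ) (c : ℤ)
    (hGper : ∀ i, i + 1 ≤ e → ∀ z z' : ℤ, ((m:ℤ) * (p:ℤ)^i) ∣ (z - z') →
        ((p:ℤ)^(i+1)) ∣ (G z - G z')) :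
    ∀ i, i ≤ e → ∀ b : ℤ, ∃! x : ℤ, 0 ≤ x ∧ x < (p:ℤ)^i * m ∧ (m:ℤ) ∣ (x - b) ∧
        ((p:ℤ)^i) ∣ (G (x - 1 + c) - x) := by
  have hp0 : (0:ℤ) < p := by exact_mod_cast hp.pos
  have hm0 : (0:ℤ) < m := by exact_mod_cast hm
  have hper' : ∀ i, i ≤ e → ∀ z z' : ℤ, ((m:ℤ) * (p:ℤ)^i) ∣ (z - z') →
      ((p:ℤ)^i) ∣ (G z - G z') := by
    intro i hi z z' hzz
    cases i with
    | zero => simp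
    | succ j =>
      exact hGper j hi z z' (dvd_trans (mul_dvd_mul_left _ (pow_dvd_pow _ (Nat.le_succ j))) hzz)
  intro i
  induction i with
  | zero =>
    intro _ b
    refine ⟨b % m, ⟨Int.emod_nonneg b (by omega), by simpa using Int.emod_lt_of_pos b hm0,
      ⟨-(b / m), by rw [Int.emod_def]; ring⟩, by simp⟩, ?_⟩
    rintro y ⟨hy0, hy1, ⟨q, hq⟩, -⟩
    simp only [pow_zero, one_mul] at hy1
    have hd : (m:ℤ) ∣ (y - b % m) := by
      refine ⟨q + b / m, ?_⟩
      have hh : b % m = b - m * (b/m) := Int.emod_def b m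
      rw [hh]
      have : y - b = m * q := hq
      linarith
    have h0 : 0 ≤ b % m := Int.emod_nonneg b (by omega)
    have h1 : b % m < m := Int.emod_lt_of_pos b hm0
    have := welch_aux_dvd_small hd hm0 (by omega) (by omega)
    omega
  | succ i IH =>
    intro hie b
    have hi : i ≤ e := by omega
    obtain ⟨x0, ⟨hx00, hx01, hx0m, hx0d⟩, hx0u⟩ := IH hi b
    obtain ⟨a, ha⟩ := hx0d
    obtain ⟨t, ⟨ht0, ht1, htd⟩, htu⟩ := welch_aux_exu_t p hp m hpm a
    have hPi : (0:ℤ) < (p:ℤ)^i := by positivity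
    have hD : (0:ℤ) < (p:ℤ)^i * m := by positivity
    have hps : ((p:ℤ))^(i+1) = (p:ℤ)^i * p := pow_succ _ i
    have hpD : ((p:ℤ))^(i+1) * m = p * ((p:ℤ)^i * m) := by rw [hps]; ring
    have hcond : ∀ t' : ℤ, ((p:ℤ)^(i+1) ∣ (G (x0 + t' * ((p:ℤ)^i * m) - 1 + c)
        - (x0 + t' * ((p:ℤ)^i * m))) ↔ (p:ℤ) ∣ (a - t' * m)) := by
      intro t'
      obtain ⟨s, hs⟩ := hGper i hie (x0 + t' * ((p:ℤ)^i * m) - 1 + c) (x0 - 1 + c)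
        ⟨t', by ring⟩
      have heq : G (x0 + t' * ((p:ℤ)^i * m) - 1 + c) - (x0 + t' * ((p:ℤ)^i * m))
          = (p:ℤ)^(i+1) * s + (p:ℤ)^i * (a - t' * m) := by
        linear_combination hs + ha
      rw [heq]
      constructor
      · intro h
        have h2 : (p:ℤ)^(i+1) ∣ (p:ℤ)^i * (a - t' * m) := (dvd_add_right ⟨s, rfl⟩).mp h
        rw [hps, mul_dvd_mul_iff_left (ne_of_gt hPi)] at h2
        exact h2
      · intro h
        exact dvd_add ⟨s, rfl⟩ (by rw [hps]; exact mul_dvd_mul_left _ h)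
    refine ⟨x0 + t * ((p:ℤ)^i * m), ⟨?_, ?_, ?_, (hcond t).mpr htd⟩, ?_⟩
    · exact add_nonneg hx00 (mul_nonneg ht0 hD.le)
    · have h1 : t * ((p:ℤ)^i * m) ≤ (p - 1) * ((p:ℤ)^i * m) :=
        mul_le_mul_of_nonneg_right (by omega) hD.le
      rw [hpD]
      nlinarith
    · have h2 : (m:ℤ) ∣ t * ((p:ℤ)^i * m) := ⟨t * (p:ℤ)^i, by ring⟩
      have he2 : x0 + t * ((p:ℤ)^i * m) - b = (x0 - b) + t * ((p:ℤ)^i * m) := by ring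
      rw [he2]
      exact dvd_add hx0m h2
    · rintro y ⟨hy0, hy1, hym, hyd⟩
      set q : ℤ := y / ((p:ℤ)^i * m) with hqdef
      set r : ℤ := y % ((p:ℤ)^i * m) with hrdef
      have hqr : ((p:ℤ)^i * m) * q + r = y := Int.mul_ediv_add_emod y _
      have hr0 : 0 ≤ r := Int.emod_nonneg y (ne_of_gt hD)
      have hr1 : r < (p:ℤ)^i * m := Int.emod_lt_of_pos y hD
      have hrm : (m:ℤ) ∣ (r - b) := by
        have h3 : (m:ℤ) ∣ (y - r) := ⟨(p:ℤ)^i * q, by linarith [hqr]⟩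
        have he3 : r - b = (y - b) - (y - r) := by ring
        rw [he3]
        exact dvd_sub hym h3
      have hrd : (p:ℤ)^i ∣ (G (r - 1 + c) - r) := by
        have hGzr : (p:ℤ)^i ∣ (G (y - 1 + c) - G (r - 1 + c)) :=
          hper' i hi _ _ ⟨q, by linarith [hqr]⟩
        have hGy : (p:ℤ)^i ∣ (G (y - 1 + c) - y) :=
          dvd_trans (pow_dvd_pow _ (Nat.le_succ i)) hyd
        have hyr : (p:ℤ)^i ∣ (y - r) := ⟨m * q, by linarith [hqr]⟩
        have h := dvd_add (dvd_sub hGy hGzr) hyr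
        have he4 : (G (y - 1 + c) - y) - (G (y - 1 + c) - G (r - 1 + c)) + (y - r)
            = G (r - 1 + c) - r := by ring
        rwa [he4] at h
      have hrx0 : r = x0 := hx0u r ⟨hr0, hr1, hrm, hrd⟩
      have hyx : y = x0 + q * ((p:ℤ)^i * m) := by rw [← hrx0]; linarith [hqr]
      have hq0 : 0 ≤ q := Int.ediv_nonneg hy0 hD.le
      have hq1 : q < p := by
        rw [hqdef, Int.ediv_lt_iff_lt_mul hD]
        rw [hpD] at hy1
        linarith
      rw [hyx] at hyd
      have := htu q ⟨hq0, hq1, (hcond q).mp hyd⟩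
      rw [hyx, this]

end WelchAux

/-- For fixed `c` and `k ≥ 1`, the Welch equation `g^(x-1+c) ≡ x (mod p^e)` has exactly
`k·m` solutions `x ∈ {1, …, p^e·k·m}`, each coprime to `p`. -/
theorem welch_count_fixed_c_extended (p : ℕ) (hp : p.Prime) (hodd : p ≠ 2)
    (e : ℕ) (he : 1 ≤ e) (g : ℤ) (hg : ¬ (p : ℤ) ∣ g)
    (m : ℕ) (hm : m = orderOf (g : ZMod p))
    (u : (ZMod (p ^ e))ˣ) (hu : (u : ZMod (p ^ e)) = (g : ZMod (p ^ e)))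
    (k : ℕ) (hk : 1 ≤ k) (c : ℤ) (S : Set ℤ)
    (hS : S = {x : ℤ | 1 ≤ x ∧ x ≤ (p : ℤ) ^ e * k * m ∧
      (↑(u ^ (x - 1 + c)) : ZMod (p ^ e)) = (x : ZMod (p ^ e))}) :
    S.ncard = k * m ∧ ∀ x ∈ S, Int.gcd x p = 1 := by
  haveI : Fact p.Prime := ⟨hp⟩
  haveI : NeZero (p^e) := ⟨pow_ne_zero _ hp.pos.ne'⟩
  -- basic facts about m
  have hgp : (g : ZMod p) ≠ 0 := by
    intro h
    exact hg ((ZMod.intCast_zmod_eq_zero_iff_dvd _ _).mp h)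
  have hmdvd : m ∣ p - 1 := by
    rw [hm]
    exact orderOf_dvd_of_pow_eq_one (ZMod.pow_card_sub_one_eq_one hgp)
  have hmpos : 0 < m := by
    rcases Nat.eq_zero_or_pos m with h | h
    · exfalso
      rw [h] at hmdvd
      have h1 := Nat.eq_zero_of_zero_dvd hmdvd
      have h2 := hp.two_le
      omega
    · exact h
  have hpm : ¬ (p:ℤ) ∣ (m:ℤ) := by
    intro h
    have h2 : p ∣ m := by exact_mod_cast h
    have h3 := Nat.le_of_dvd hmpos h2
    have h4 := Nat.le_of_dvd (by have := hp.two_le; omega) hmdvd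
    have h5 := hp.two_le
    omega
  -- the integer-valued power function
  set G : ℤ → ℤ := fun z => (((u ^ z : (ZMod (p^e))ˣ) : ZMod (p^e)).val : ℤ) with hGdef
  -- coprimality of G
  have hGcop : ∀ z : ℤ, ¬ (p:ℤ) ∣ G z := by
    intro z hz
    have hz' : (p:ℤ) ∣ ((((u ^ z : (ZMod (p^e))ˣ) : ZMod (p^e)).val : ℤ)) := hz
    have h1 : p ∣ ((u ^ z : (ZMod (p^e))ˣ) : ZMod (p^e)).val := by exact_mod_cast hz' 
    have h2 := ZMod.val_coe_unit_coprime (u ^ z)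
    have h3 : p ∣ Nat.gcd ((u ^ z : (ZMod (p^e))ˣ) : ZMod (p^e)).val (p^e) :=
      Nat.dvd_gcd h1 (dvd_pow_self p (by omega))
    rw [h2] at h3
    have h4 := Nat.le_of_dvd (by omega) h3
    have h5 := hp.two_le
    omega
  -- the key periodicity property
  have hGper : ∀ i : ℕ, i + 1 ≤ e → ∀ z z' : ℤ, ((m:ℤ) * (p:ℤ)^i) ∣ (z - z') →
      ((p:ℤ)^(i+1)) ∣ (G z - G z') := by
    intro i hie z z' hzz
    haveI : NeZero (p^(i+1)) := ⟨pow_ne_zero _ hp.pos.ne'⟩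
    have hdvd : p ^ (i+1) ∣ p ^ e := pow_dvd_pow p hie
    have hdvd2 : p ∣ p^(i+1) := dvd_pow_self p (Nat.succ_ne_zero i)
    set φ : ZMod (p^e) →+* ZMod (p^(i+1)) := ZMod.castHom hdvd (ZMod (p^(i+1))) with hφ
    set U : (ZMod (p^(i+1)))ˣ := Units.map φ.toMonoidHom u with hUdef
    have hcoe : ∀ w : ℤ, ((U ^ w : (ZMod (p^(i+1)))ˣ) : ZMod (p^(i+1)))
        = φ ((u ^ w : (ZMod (p^e))ˣ) : ZMod (p^e)) := by
      intro w
      rw [hUdef, ← map_zpow]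
      rfl
    have h1 : ((U ^ (m:ℕ) : (ZMod (p^(i+1)))ˣ) : ZMod (p^(i+1))) = φ ((u : ZMod (p^e)))^m := by
      simp [hUdef, Units.val_pow_eq_pow_val, MonoidHom.coe_coe]
    have hval1 : (((U ^ (m:ℕ) : (ZMod (p^(i+1)))ˣ) : ZMod (p^(i+1))).val : ZMod p) = 1 := by
      rw [ZMod.natCast_val, ← ZMod.castHom_apply (h := hdvd2), h1, map_pow, hu, map_intCast,
        map_intCast, hm]
      exact pow_orderOf_eq_one _
    have hv : (p:ℤ) ∣ ((((U ^ (m:ℕ) : (ZMod (p^(i+1)))ˣ) : ZMod (p^(i+1))).val : ℤ) - 1) := by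
      rw [← ZMod.intCast_zmod_eq_zero_iff_dvd, Int.cast_sub, Int.cast_natCast, Int.cast_one,
        hval1, sub_self]
    have hvp : ((p:ℤ))^(i+1) ∣
        ((((U ^ (m:ℕ) : (ZMod (p^(i+1)))ˣ) : ZMod (p^(i+1))).val : ℤ))^(p^i) - 1 := by
      have := dvd_sub_pow_of_dvd_sub (p := p)
        (a := (((U ^ (m:ℕ) : (ZMod (p^(i+1)))ˣ) : ZMod (p^(i+1))).val : ℤ)) (b := 1) hv i
      simpa using this
    have h2 : ((U ^ (m:ℕ))^(p^i) : (ZMod (p^(i+1)))ˣ) = 1 := by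
      apply Units.ext
      rw [Units.val_pow_eq_pow_val, Units.val_one]
      have hrep : ((U ^ (m:ℕ) : (ZMod (p^(i+1)))ˣ) : ZMod (p^(i+1)))
          = (((((U ^ (m:ℕ) : (ZMod (p^(i+1)))ˣ) : ZMod (p^(i+1)))).val : ℤ)
            : ZMod (p^(i+1))) := by
        rw [Int.cast_natCast, ZMod.natCast_val, ZMod.cast_id]
      rw [hrep, ← Int.cast_pow]
      have h3 : (((((((U ^ (m:ℕ) : (ZMod (p^(i+1)))ˣ) : ZMod (p^(i+1)))).val : ℤ))^(p^i) - 1 : ℤ)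
          : ZMod (p^(i+1))) = 0 := by
        rw [ZMod.intCast_zmod_eq_zero_iff_dvd]
        exact_mod_cast hvp
      rw [Int.cast_sub, Int.cast_one] at h3
      linear_combination h3
    have hU1 : U ^ ((m:ℕ) * p^i) = 1 := by rw [pow_mul]; exact h2
    obtain ⟨s, hs⟩ := hzz
    have hz : z = z' + (((m:ℕ) * p^i : ℕ) : ℤ) * s := by push_cast; linarith
    have hUz : U ^ z = U ^ z' := by
      rw [hz, zpow_add, zpow_mul, zpow_natCast, hU1, one_zpow, mul_one]
    have hrep2 : ∀ w : ℤ, ((G w : ℤ) : ZMod (p^(i+1)))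
        = ((U ^ w : (ZMod (p^(i+1)))ˣ) : ZMod (p^(i+1))) := by
      intro w
      rw [hGdef]
      rw [Int.cast_natCast, ZMod.natCast_val, ← ZMod.castHom_apply (h := hdvd), hcoe w]
    have hmodeq := (ZMod.intCast_eq_intCast_iff _ _ _).mp
      (by rw [hrep2 z, hrep2 z', hUz] :
        ((G z : ℤ) : ZMod (p^(i+1))) = ((G z' : ℤ) : ZMod (p^(i+1))))
    have hd := Int.ModEq.dvd hmodeq
    have hcast : ((p^(i+1) : ℕ) : ℤ) = (p:ℤ)^(i+1) := by push_cast; ring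
    rw [hcast] at hd
    have := dvd_neg.mpr hd
    rwa [neg_sub] at this
  -- the defining condition of S as integer divisibility
  have hQ : ∀ x : ℤ, ((↑(u ^ (x - 1 + c)) : ZMod (p ^ e)) = (x : ZMod (p ^ e))
      ↔ (p:ℤ)^e ∣ (G (x - 1 + c) - x)) := by
    intro x
    have h1 : (↑(u ^ (x - 1 + c)) : ZMod (p ^ e)) = ((G (x - 1 + c) : ℤ) : ZMod (p^e)) := by
      rw [hGdef, Int.cast_natCast, ZMod.natCast_val, ZMod.cast_id]
    rw [h1, ZMod.intCast_eq_intCast_iff]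
    constructor
    · intro h
      have hd := Int.ModEq.dvd h
      have hcast : ((p^e : ℕ) : ℤ) = (p:ℤ)^e := by push_cast; ring
      rw [hcast] at hd
      have := dvd_neg.mpr hd
      rwa [neg_sub] at this
    · intro h
      rw [Int.modEq_iff_dvd]
      have hcast : ((p^e : ℕ) : ℤ) = (p:ℤ)^e := by push_cast; ring
      rw [hcast]
      have := dvd_neg.mpr h
      rwa [neg_sub] at this
  classical
  -- setup
  have huniq := welch_aux_uniq p hp e m hmpos hpm G c hGper e le_rfl
  set P : ℤ := (p:ℤ)^e * m with hPdef
  have hP0 : (0:ℤ) < P := by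
    rw [hPdef]
    have hm9 : (0:ℤ) < (m:ℤ) := by exact_mod_cast hmpos
    have hp9 : (0:ℤ) < (p:ℤ) := by exact_mod_cast hp.pos
    exact mul_pos (pow_pos hp9 e) hm9
  have hpe : (p:ℤ)^e = (p:ℤ)^(e-1) * p := by
    rw [← pow_succ]
    congr 1
    omega
  have hGperE : ∀ z z' : ℤ, ((m:ℤ) * (p:ℤ)^(e-1)) ∣ (z - z') →
      ((p:ℤ)^e) ∣ (G z - G z') := by
    intro z z' hzz
    have h := hGper (e-1) (by omega) z z' hzz
    have he1 : e - 1 + 1 = e := by omega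
    rwa [he1] at h
  have hQper : ∀ x x' : ℤ, P ∣ (x - x') → ((p:ℤ)^e ∣ (G (x-1+c) - x)) →
      ((p:ℤ)^e ∣ (G (x'-1+c) - x')) := by
    rintro x x' ⟨s, hs⟩ hx
    have h1 : (p:ℤ)^e ∣ (G (x-1+c) - G (x'-1+c)) :=
      hGperE _ _ ⟨p * s, by rw [show x-1+c-(x'-1+c) = x - x' from by ring, hs, hPdef, hpe]; ring⟩
    have h2 : (p:ℤ)^e ∣ (x - x') := ⟨(m:ℤ) * s, by rw [hs, hPdef]; ring⟩
    have h3 := dvd_add (dvd_sub hx h1) h2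
    have he2 : (G (x-1+c) - x) - (G (x-1+c) - G (x'-1+c)) + (x - x') = G (x'-1+c) - x' := by
      ring
    rwa [he2] at h3
  set X : ℤ → ℤ := fun b => (huniq b).choose with hXdef
  have hXs : ∀ b : ℤ, 0 ≤ X b ∧ X b < P ∧ (m:ℤ) ∣ (X b - b) ∧
      (p:ℤ)^e ∣ (G (X b - 1 + c) - X b) := fun b => (huniq b).choose_spec.1
  have hXu : ∀ b y : ℤ, (0 ≤ y ∧ y < P ∧ (m:ℤ) ∣ (y - b) ∧
      (p:ℤ)^e ∣ (G (y - 1 + c) - y)) → y = X b := fun b => (huniq b).choose_spec.2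
  have hX1 : ∀ b : ℤ, 1 ≤ X b := by
    intro b
    obtain ⟨h0, h1, h2, h3⟩ := hXs b
    rcases eq_or_lt_of_le h0 with h | h
    · exfalso
      rw [← h] at h3
      have h4 : (p:ℤ) ∣ (G (0 - 1 + c) - 0) :=
        dvd_trans (dvd_pow_self (p:ℤ) (by omega : e ≠ 0)) h3
      rw [sub_zero] at h4
      exact hGcop _ h4
    · omega
  set f : ℕ × ℕ → ℤ := fun jb => X (jb.2 : ℤ) + (jb.1 : ℤ) * P with hfdef
  set F : Finset ℤ := (Finset.range k ×ˢ Finset.range m).image f with hFdef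
  have hbound : (p:ℤ)^e * k * m = k * P := by rw [hPdef]; ring
  -- S equals the finset F
  have hSF : S = ↑F := by
    rw [hS]
    ext x
    simp only [Set.mem_setOf_eq, hFdef, Finset.coe_image, Set.mem_image, Finset.mem_coe,
      Finset.mem_product, Finset.mem_range]
    constructor
    · rintro ⟨hx1, hx2, hx3⟩
      have hxd := (hQ x).mp hx3
      set q : ℤ := x / P with hqdef
      set r : ℤ := x % P with hrdef
      have hqr : P * q + r = x := Int.mul_ediv_add_emod x P
      have hr0 : 0 ≤ r := Int.emod_nonneg x (ne_of_gt hP0)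
      have hr1 : r < P := Int.emod_lt_of_pos x hP0
      set b : ℤ := r % m with hbdef
      have hm0' : (0:ℤ) < m := by exact_mod_cast hmpos
      have hb0 : 0 ≤ b := Int.emod_nonneg r (by omega)
      have hb1 : b < m := Int.emod_lt_of_pos r hm0'
      have hrd : (p:ℤ)^e ∣ (G (r - 1 + c) - r) := hQper x r ⟨q, by linarith⟩ hxd
      have hrX : r = X b := hXu b r ⟨hr0, hr1,
        ⟨r / m, by rw [hbdef, Int.emod_def]; ring⟩, hrd⟩
      have hq0 : 0 ≤ q := Int.ediv_nonneg (by linarith) hP0.le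
      have hrge1 : 1 ≤ r := by rw [hrX]; exact hX1 b
      rw [hbound] at hx2
      have hq1 : q < k := by
        have hlt : P * q < P * k := by nlinarith
        exact (mul_lt_mul_iff_right₀ hP0).mp hlt
      refine ⟨(q.toNat, b.toNat), ⟨by omega, by omega⟩, ?_⟩
      simp only [hfdef]
      have hbt : ((b.toNat : ℕ) : ℤ) = b := by omega
      have hqt : ((q.toNat : ℕ) : ℤ) = q := by omega
      rw [hbt, hqt, ← hrX]
      linarith
    · rintro ⟨⟨j, b⟩, ⟨hj, hb⟩, rfl⟩
      simp only [hfdef]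
      obtain ⟨h0, h1, h2, h3⟩ := hXs (b:ℤ)
      have hj0 : (0:ℤ) ≤ (j:ℤ) := by positivity
      have hjk : (j:ℤ) + 1 ≤ (k:ℤ) := by exact_mod_cast hj
      refine ⟨by linarith [hX1 (b:ℤ), mul_nonneg hj0 hP0.le], ?_, ?_⟩
      · rw [hbound]
        have hmul : ((j:ℤ) + 1) * P ≤ (k:ℤ) * P := mul_le_mul_of_nonneg_right hjk hP0.le
        nlinarith
      · refine (hQ _).mpr (hQper (X (b:ℤ)) (X (b:ℤ) + (j:ℤ) * P) ⟨-(j:ℤ), by ring⟩ h3)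
  -- injectivity
  have hinj : ∀ jb ∈ ((Finset.range k ×ˢ Finset.range m) : Finset (ℕ × ℕ)),
      ∀ jb' ∈ ((Finset.range k ×ˢ Finset.range m) : Finset (ℕ × ℕ)),
      f jb = f jb' → jb = jb' := by
    rintro ⟨j, b⟩ h1 ⟨j', b'⟩ h2 heq
    simp only [Finset.mem_product, Finset.mem_range] at h1 h2
    simp only [hfdef] at heq
    have hXX : X (b:ℤ) - X (b':ℤ) = ((j':ℤ) - (j:ℤ)) * P := by linear_combination heq
    have d1 := (hXs (b:ℤ)).2.2.1
    have d2 := (hXs (b':ℤ)).2.2.1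
    have hmP : (m:ℤ) ∣ P := ⟨(p:ℤ)^e, by rw [hPdef]; ring⟩
    have hds : (m:ℤ) ∣ ((b:ℤ) - (b':ℤ)) := by
      have he5 : (b:ℤ) - (b':ℤ)
          = (((j':ℤ) - (j:ℤ)) * P - (X (b:ℤ) - (b:ℤ))) + (X (b':ℤ) - (b':ℤ)) := by
        linear_combination hXX
      rw [he5]
      exact dvd_add (dvd_sub (hmP.mul_left _) d1) d2
    have hm0' : (0:ℤ) < m := by exact_mod_cast hmpos
    have hbb : (b:ℤ) - (b':ℤ) = 0 := by
      apply welch_aux_dvd_small hds hm0'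
      · have : ((b':ℤ)) < m := by exact_mod_cast h2.2
        have hbnn : (0:ℤ) ≤ (b:ℤ) := by positivity
        omega
      · have : ((b:ℤ)) < m := by exact_mod_cast h1.2
        have hbnn : (0:ℤ) ≤ (b':ℤ) := by positivity
        omega
    have hbeq : b = b' := by omega
    subst hbeq
    have hjj : ((j':ℤ) - (j:ℤ)) * P = 0 := by rw [← hXX]; ring
    have : (j':ℤ) - (j:ℤ) = 0 := by
      rcases mul_eq_zero.mp hjj with h | h
      · exact h
      · omega
    have : j = j' := by omega
    simp [this]
  constructor
  · rw [hSF, Set.ncard_coe_finset, hFdef, Finset.card_image_of_injOn hinj,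
      Finset.card_product, Finset.card_range, Finset.card_range]
  · intro x hx
    rw [hS] at hx
    obtain ⟨hx1, hx2, hx3⟩ := hx
    have hxd := (hQ x).mp hx3
    have hpd : (p:ℤ) ∣ (G (x-1+c) - x) :=
      dvd_trans (dvd_pow_self (p:ℤ) (by omega : e ≠ 0)) hxd
    by_contra hne
    have hd1 : Int.gcd x (p:ℤ) ∣ p := by
      have h := Int.gcd_dvd_right (a := x) (b := (p:ℤ))
      exact_mod_cast h
    rcases hp.eq_one_or_self_of_dvd _ hd1 with h1 | h1
    · exact hne h1
    · have hxp : (p:ℤ) ∣ x := by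
        have h := Int.gcd_dvd_left (a := x) (b := (p:ℤ))
        rw [h1] at h
        exact h
      have h5 : (p:ℤ) ∣ G (x-1+c) := by
        have := dvd_add hpd hxp
        rwa [sub_add_cancel] at this
      exact hGcop _ h5
end

section
/- Let p be an odd prime, g an integer not divisible by p, and m the multiplicative order of g modulo p. Then the number of pairs (x, c) with x ∈ {1, 2, ..., m·p}, c ∈ {1, 2, ..., m}, p ∤ x, and g^(x-1+c) ≡ x (mod p) is exactly m². -/
/-- The number of pairs `(x, c)` with `x ∈ {1, …, m·p}`, `c ∈ {1, …, m}`, `p ∤ x`, and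
`g^(x-1+c) ≡ x (mod p)` is exactly `m²`. -/
theorem welch_count_pairs_mod_p (p : ℕ) (hp : p.Prime) (hodd : p ≠ 2)
    (g : ℤ) (hg : ¬ (p : ℤ) ∣ g) (m : ℕ) (hm : m = orderOf (g : ZMod p))
    (u : (ZMod p)ˣ) (hu : (u : ZMod p) = (g : ZMod p))
    (S : Set (ℤ × ℤ))
    (hS : S = {xc : ℤ × ℤ | 1 ≤ xc.1 ∧ xc.1 ≤ (m : ℤ) * p ∧
      1 ≤ xc.2 ∧ xc.2 ≤ (m : ℤ) ∧ ¬ (p : ℤ) ∣ xc.1 ∧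
      (↑(u ^ (xc.1 - 1 + xc.2)) : ZMod p) = (xc.1 : ZMod p)}) :
    S.ncard = m ^ 2 := by
  haveI : Fact p.Prime := ⟨hp⟩
  -- the order of `u` is `m`
  have hmu : orderOf u = m := by
    rw [hm, ← hu, orderOf_units]
  have hm0 : 0 < m := hmu ▸ orderOf_pos u
  haveI : NeZero m := ⟨hm0.ne'⟩
  -- `m < p` and `m` is coprime to `p`
  have hmdvd : m ∣ p - 1 := by
    have := orderOf_dvd_card (x := u)
    simpa [hmu, ZMod.card_units_eq_totient, Nat.totient_prime hp] using this
  have hp2 : 2 ≤ p := hp.two_le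
  have hmlt : m < p := by
    have h1 : m ≤ p - 1 := Nat.le_of_dvd (by omega) hmdvd
    omega
  have hpm : ¬ p ∣ m := fun h => absurd (Nat.le_of_dvd hm0 h) (not_le.mpr hmlt)
  have hmpne : (m : ZMod p) ≠ 0 := by
    rw [Ne, ZMod.natCast_eq_zero_iff]; exact hpm
  have hn0 : (0 : ℤ) < (m : ℤ) * p := by
    have : 0 < m * p := Nat.mul_pos hm0 hp.pos
    exact_mod_cast this
  -- congruent exponents give equal powers of `u`
  have hupow : ∀ s t : ℤ, s ≡ t [ZMOD (m : ℤ)] → u ^ s = u ^ t := by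
    intro s t hst
    have hd : ((orderOf u : ℕ) : ℤ) ∣ t - s := by
      rw [hmu]; exact Int.ModEq.dvd hst
    have h1 : u ^ (t - s) = 1 := orderOf_dvd_iff_zpow_eq_one.mp hd
    calc u ^ s = u ^ s * u ^ (t - s) := by rw [h1, mul_one]
    _ = u ^ (s + (t - s)) := (zpow_add u s (t - s)).symm
    _ = u ^ t := by ring_nf
  -- a helper: two integers in `[1, N]` congruent mod `N` are equal
  have key : ∀ a b N : ℤ, 1 ≤ a → a ≤ N → 1 ≤ b → b ≤ N → N ∣ b - a → a = b := by
    intro a b N h1 h2 h3 h4 hdvd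
    have h0 : b - a = 0 := Int.eq_zero_of_dvd_of_natAbs_lt_natAbs hdvd (by omega)
    omega
  have hcopZ : ((m : ℤ)).natAbs.Coprime ((p : ℤ)).natAbs := by
    simpa using (hp.coprime_iff_not_dvd.mpr hpm).symm
  -- the bijection with `ZMod m × ZMod m`
  subst hS
  set S : Set (ℤ × ℤ) := {xc : ℤ × ℤ | 1 ≤ xc.1 ∧ xc.1 ≤ (m : ℤ) * p ∧
      1 ≤ xc.2 ∧ xc.2 ≤ (m : ℤ) ∧ ¬ (p : ℤ) ∣ xc.1 ∧
      (↑(u ^ (xc.1 - 1 + xc.2)) : ZMod p) = (xc.1 : ZMod p)} with hSdef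
  have hbij : ∃ f : S → ZMod m × ZMod m, Function.Bijective f := by
    refine ⟨fun z => ((z.1.1 : ZMod m), (z.1.2 : ZMod m)), ?_, ?_⟩
    · -- injective
      rintro ⟨⟨x₁, c₁⟩, hx11, hx12, hc11, hc12, hnd1, heq1⟩
        ⟨⟨x₂, c₂⟩, hx21, hx22, hc21, hc22, hnd2, heq2⟩ h
      simp only [Prod.mk.injEq, Subtype.mk.injEq] at h ⊢
      obtain ⟨hxm, hcm⟩ := h
      rw [ZMod.intCast_eq_intCast_iff] at hxm hcm
      have hc : c₁ = c₂ := key c₁ c₂ m hc11 hc12 hc21 hc22 hcm.dvd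
      have hexp : u ^ (x₁ - 1 + c₁) = u ^ (x₂ - 1 + c₂) := by
        refine hupow _ _ ?_
        exact (hxm.sub_right 1).add hcm
      have hxp : x₁ ≡ x₂ [ZMOD (p : ℤ)] := by
        rw [← ZMod.intCast_eq_intCast_iff, ← heq1, ← heq2, hexp]
      have hxmp : x₁ ≡ x₂ [ZMOD ((m : ℤ) * p)] :=
        (Int.modEq_and_modEq_iff_modEq_mul hcopZ).mp ⟨hxm, hxp⟩
      exact ⟨key x₁ x₂ ((m : ℤ) * p) hx11 hx12 hx21 hx22 hxmp.dvd, hc⟩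
    · -- surjective
      rintro ⟨a, b⟩
      set c : ℤ := if b = 0 then (m : ℤ) else (b.val : ℤ) with hcdef
      have hc1 : 1 ≤ c := by
        rw [hcdef]; split
        · exact_mod_cast hm0
        · rename_i hb
          have : b.val ≠ 0 := fun h => hb ((ZMod.val_eq_zero b).mp h)
          omega
      have hc2 : c ≤ m := by
        rw [hcdef]; split
        · rfl
        · exact_mod_cast (ZMod.val_lt b).le
      have hcb : (c : ZMod m) = b := by
        rw [hcdef]; split
        · rename_i hb; simp [hb]
        · push_cast; simp [ZMod.natCast_val, ZMod.cast_id]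
      set e : ℤ := (a.val : ℤ) - 1 + c with hedef
      set U : (ZMod p)ˣ := u ^ e with hUdef
      set d : ZMod p := (m : ZMod p)⁻¹ * ((U : ZMod p) - ((a.val : ℕ) : ZMod p)) with hddef
      set x₀ : ℤ := (a.val : ℤ) + (m : ℤ) * (d.val : ℤ) with hx0def
      set x : ℤ := (x₀ - 1) % ((m : ℤ) * p) + 1 with hxdef
      have hx0m : x₀ ≡ (a.val : ℤ) [ZMOD (m : ℤ)] :=
        Int.modEq_iff_dvd.mpr ⟨-(d.val : ℤ), by rw [hx0def]; ring⟩
      have hx0p : ((x₀ : ℤ) : ZMod p) = (U : ZMod p) := by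
        have hdv : ((d.val : ℕ) : ZMod p) = d := by simp [ZMod.natCast_val, ZMod.cast_id]
        rw [hx0def]
        push_cast
        rw [hdv, hddef, ← mul_assoc, mul_inv_cancel₀ hmpne]
        ring
      have hxx0 : x ≡ x₀ [ZMOD ((m : ℤ) * p)] := by
        have h1 : (x₀ - 1) % ((m : ℤ) * p) ≡ x₀ - 1 [ZMOD ((m : ℤ) * p)] :=
          Int.emod_emod_of_dvd _ dvd_rfl
        simpa [hxdef] using h1.add_right 1
      have hxm : x ≡ (a.val : ℤ) [ZMOD (m : ℤ)] :=
        (hxx0.of_dvd (dvd_mul_right _ _)).trans hx0m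
      have hxp : ((x : ℤ) : ZMod p) = (U : ZMod p) := by
        have h2 : x ≡ x₀ [ZMOD ((p : ℕ) : ℤ)] := hxx0.of_dvd (dvd_mul_left _ _)
        calc ((x : ℤ) : ZMod p) = ((x₀ : ℤ) : ZMod p) :=
              (ZMod.intCast_eq_intCast_iff x x₀ p).mpr h2
        _ = (U : ZMod p) := hx0p
      have hb1 : 0 ≤ (x₀ - 1) % ((m : ℤ) * p) := Int.emod_nonneg _ hn0.ne'
      have hb2 : (x₀ - 1) % ((m : ℤ) * p) < (m : ℤ) * p := Int.emod_lt_of_pos _ hn0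
      have hx1 : 1 ≤ x := by rw [hxdef]; linarith
      have hx2 : x ≤ (m : ℤ) * p := by rw [hxdef]; linarith
      have hnd : ¬ ((p : ℕ) : ℤ) ∣ x := by
        intro hdvd
        have h0 : ((x : ℤ) : ZMod p) = 0 := (ZMod.intCast_zmod_eq_zero_iff_dvd x p).mpr hdvd
        rw [hxp] at h0
        exact Units.ne_zero U h0
      have heq : (↑(u ^ (x - 1 + c)) : ZMod p) = (x : ZMod p) := by
        have hUe : u ^ (x - 1 + c) = U := by
          rw [hUdef]; exact hupow _ _ ((hxm.sub_right 1).add_right c)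
        rw [hUe, hxp]
      refine ⟨⟨(x, c), hx1, hx2, hc1, hc2, hnd, heq⟩, ?_⟩
      simp only [Prod.mk.injEq]
      constructor
      · have h3 : ((x : ℤ) : ZMod m) = (((a.val : ℕ) : ℤ) : ZMod m) :=
          (ZMod.intCast_eq_intCast_iff _ _ _).mpr hxm
        rw [h3]
        push_cast
        simp [ZMod.natCast_val, ZMod.cast_id]
      · exact hcb
  obtain ⟨f, hf⟩ := hbij
  have hcard : Nat.card S = Nat.card (ZMod m × ZMod m) := Nat.card_eq_of_bijective f hf
  rw [← Nat.card_coe_set_eq, hcard, Nat.card_prod, Nat.card_zmod, sq]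
end

section
/- Let p be an odd prime, e ≥ 1, g an integer not divisible by p, and m the multiplicative order of g modulo p. Then the number of pairs (x, c) with x ∈ {1, 2, ..., m·p^e}, c ∈ {1, 2, ..., m·p^(e-1)}, p ∤ x, and g^(x-1+c) ≡ x (mod p^e) is exactly m²·p^(e-1). -/
/-!
Let `d` be the order of `u`. Its `m`-th power reduces to `1` mod `p`, so it lies in the kernel of
reduction `(ZMod (p ^ e))ˣ → (ZMod p)ˣ`, of order `p ^ (e - 1)`; hence `d ∣ L := m * p ^ (e - 1)`.
For fixed `x`, the congruence `u ^ (x - 1 + c) = x` is solvable only when `x mod p ^ e` lies in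
`⟨u⟩` (which already forces `p ∤ x`), and then its solutions `c` form one residue class mod `d`,
which meets `(0, L]` in `L / d` points. Each of the `d` residues in `⟨u⟩` is attained by exactly
`m` integers `x ∈ (0, m * p ^ e]`, so the count is `m * d * (L / d) = m * L`.
-/

open Finset Function Subgroup

theorem Int.Ioc_zero_mul_filter_modEq_card {r : ℤ} (hr : 0 < r) (k : ℕ) (v : ℤ) :
    #{x ∈ Ioc 0 (k * r) | x ≡ v [ZMOD r]} = k := by
  have hcard := Int.Ioc_filter_modEq_card 0 (k * r) hr v
  have hfloor : ((k * r : ℤ) - v : ℚ) / r = (k : ℤ) + (((0 : ℤ) : ℚ) - v) / r := by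
    field_simp
    push_cast
    ring
  rw [hfloor, Int.floor_intCast_add, add_sub_cancel_right, max_eq_left (by positivity)] at hcard
  exact_mod_cast hcard

theorem MonoidHom.orderOf_dvd_orderOf_map_mul_natCard_ker {G H : Type*} [Group G] [Group H]
    (f : G →* H) (x : G) : orderOf x ∣ orderOf (f x) * Nat.card f.ker := by
  have hker : x ^ orderOf (f x) ∈ f.ker := by
    rw [MonoidHom.mem_ker, map_pow, pow_orderOf_eq_one]
  rw [orderOf_dvd_iff_pow_eq_one, pow_mul]
  exact orderOf_dvd_iff_pow_eq_one.mp (f.ker.orderOf_dvd_natCard hker)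

theorem ZMod.natCard_ker_unitsMap_mul_totient {m n : ℕ} [NeZero m] (h : n ∣ m) :
    Nat.card (unitsMap h).ker * n.totient = m.totient := by
  have : NeZero n := ⟨fun hn ↦ NeZero.ne m (Nat.eq_zero_of_zero_dvd (hn ▸ h))⟩
  have := (unitsMap h).ker.card_mul_index
  rwa [index_ker, MonoidHom.range_eq_top_of_surjective _ (unitsMap_surjective h), card_top,
    Nat.card_eq_fintype_card (α := (ZMod n)ˣ), Nat.card_eq_fintype_card (α := (ZMod m)ˣ),
    card_units_eq_totient, card_units_eq_totient] at this

theorem ZMod.natCard_ker_unitsMap_prime_pow {p : ℕ} [hp : Fact p.Prime] {e : ℕ} (he : e ≠ 0) :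
    Nat.card (unitsMap (dvd_pow_self p he)).ker = p ^ (e - 1) := by
  have := natCard_ker_unitsMap_mul_totient (dvd_pow_self p he)
  rw [Nat.totient_prime_pow hp.out (Nat.pos_of_ne_zero he), Nat.totient_prime hp.out] at this
  exact Nat.eq_of_mul_eq_mul_right (Nat.sub_pos_of_lt hp.out.one_lt) this

theorem ZMod.not_dvd_of_isUnit_intCast_prime_pow {p : ℕ} [hp : Fact p.Prime] {e : ℕ}
    (he : e ≠ 0) {x : ℤ} (hx : IsUnit (x : ZMod (p ^ e))) : ¬ (p : ℤ) ∣ x := by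
  have := hx.map (castHom (dvd_pow_self p he) (ZMod p))
  rwa [map_intCast, CharP.isUnit_intCast_iff hp.out] at this

theorem Ioc_filter_zpow_add_eq_card {G M : Type*} [Group G] [DecidableEq M] {φ : G → M}
    (hφ : Injective φ) {u : G} {L : ℕ} (hL : orderOf u ∣ L) (a : ℤ) (y : M)
    [Decidable (y ∈ φ '' zpowers u)] :
    #{c ∈ Ioc (0 : ℤ) L | φ (u ^ (a + c)) = y} =
      if y ∈ φ '' zpowers u then L / orderOf u else 0 := by
  split_ifs with hy
  · obtain ⟨_, ⟨k, rfl⟩, rfl⟩ := hy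
    obtain ⟨q, rfl⟩ := hL
    rcases (orderOf u).eq_zero_or_pos with hd | hd
    · simp [hd]
    beta_reduce
    have hiff (c : ℤ) : φ (u ^ (a + c)) = φ (u ^ k) ↔ c ≡ k - a [ZMOD orderOf u] := by
      rw [hφ.eq_iff, zpow_eq_zpow_iff_modEq, Int.modEq_iff_dvd, Int.modEq_iff_dvd, sub_sub]
    simp_rw [hiff]
    rw [Nat.mul_div_cancel_left _ hd, Nat.cast_mul, mul_comm]
    exact Int.Ioc_zero_mul_filter_modEq_card (by exact_mod_cast hd) q _
  · rw [card_eq_zero, filter_eq_empty_iff]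
    exact fun c _ hc ↦ hy ⟨_, zpow_mem (mem_zpowers u) _, hc⟩

theorem ZMod.Ioc_zero_mul_filter_intCast_mem_card (n : ℕ) [NeZero n] (k : ℕ) (s : Set (ZMod n))
    [DecidablePred (· ∈ s)] :
    #{x ∈ Ioc (0 : ℤ) (k * n : ℤ) | ((x : ℤ) : ZMod n) ∈ s} = k * s.ncard := by
  have hfiber (y : ZMod n) : #{x ∈ Ioc (0 : ℤ) (k * n : ℤ) | ((x : ℤ) : ZMod n) = y} = k := by
    have hres (x : ℤ) : (x : ZMod n) = y ↔ x ≡ y.cast [ZMOD n] := by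
      rw [← intCast_eq_intCast_iff, intCast_zmod_cast]
    simp_rw [hres]
    exact Int.Ioc_zero_mul_filter_modEq_card (by exact_mod_cast NeZero.pos n) k _
  rw [card_eq_sum_card_fiberwise (f := fun x : ℤ ↦ (x : ZMod n)) (t := s.toFinset)
    (fun x hx ↦ by simpa using (mem_filter.mp hx).2)]
  rw [sum_congr rfl fun y hy ↦ ?_, sum_const, smul_eq_mul, ← Set.ncard_eq_toFinset_card',
    mul_comm]
  rw [filter_filter, filter_congr fun (x : ℤ) _ ↦
    and_iff_right_of_imp fun (hx : (x : ZMod n) = y) ↦ hx ▸ Set.mem_toFinset.mp hy, hfiber y]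

theorem ZMod.orderOf_dvd_orderOf_intCast_mul_prime_pow {p : ℕ} [Fact p.Prime] {e : ℕ}
    (he : e ≠ 0) {g : ℤ} (u : (ZMod (p ^ e))ˣ) (hu : (u : ZMod (p ^ e)) = g) :
    orderOf u ∣ orderOf (g : ZMod p) * p ^ (e - 1) := by
  have hmap : ((unitsMap (dvd_pow_self p he) u : (ZMod p)ˣ) : ZMod p) = g := by
    rw [unitsMap_val, hu, cast_intCast (dvd_pow_self p he)]
  have := (unitsMap (dvd_pow_self p he)).orderOf_dvd_orderOf_map_mul_natCard_ker u
  rwa [natCard_ker_unitsMap_prime_pow he, ← orderOf_units (y := unitsMap _ u), hmap] at this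

theorem welch_count_pairs_mod_pe_general (p : ℕ) (hp : p.Prime)
    (e : ℕ) (he : 1 ≤ e) (g : ℤ)
    (m : ℕ) (hm : m = orderOf (g : ZMod p))
    (u : (ZMod (p ^ e))ˣ) (hu : (u : ZMod (p ^ e)) = (g : ZMod (p ^ e)))
    (S : Set (ℤ × ℤ))
    (hS : S = {xc : ℤ × ℤ | 1 ≤ xc.1 ∧ xc.1 ≤ (m : ℤ) * (p : ℤ) ^ e ∧
      1 ≤ xc.2 ∧ xc.2 ≤ (m : ℤ) * (p : ℤ) ^ (e - 1) ∧ ¬ (p : ℤ) ∣ xc.1 ∧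
      (↑(u ^ (xc.1 - 1 + xc.2)) : ZMod (p ^ e)) = (xc.1 : ZMod (p ^ e))}) :
    S.ncard = m ^ 2 * p ^ (e - 1) := by
  classical
  have : Fact p.Prime := ⟨hp⟩
  have he0 : e ≠ 0 := by omega
  have hL : orderOf u ∣ m * p ^ (e - 1) :=
    hm ▸ ZMod.orderOf_dvd_orderOf_intCast_mul_prime_pow he0 u hu
  set L := m * p ^ (e - 1)
  have hU : (Units.val '' (zpowers u : Set (ZMod (p ^ e))ˣ)).ncard = orderOf u := by
    rw [Set.ncard_image_of_injective _ Units.val_injective, ← Nat.card_coe_set_eq,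
      SetLike.coe_sort_coe, Nat.card_zpowers]
  have hS' : S = ↑({xc ∈ Ioc (0 : ℤ) (m * (p ^ e : ℕ) : ℤ) ×ˢ Ioc (0 : ℤ) L |
      ((u ^ (xc.1 - 1 + xc.2) : (ZMod (p ^ e))ˣ) : ZMod (p ^ e)) = xc.1}) := by
    ext ⟨x, c⟩
    have hcoprime (h : ((u ^ (x - 1 + c) : (ZMod (p ^ e))ˣ) : ZMod (p ^ e)) = x) :
        ¬ (p : ℤ) ∣ x := ZMod.not_dvd_of_isUnit_intCast_prime_pow he0 (h ▸ Units.isUnit _)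
    simp only [hS, L, Set.mem_ofPred_eq, coe_filter, mem_product, mem_Ioc]
    push_cast
    exact ⟨fun ⟨hx1, hxN, hc1, hcL, _, hx⟩ ↦ ⟨⟨⟨by omega, hxN⟩, by omega, hcL⟩, hx⟩,
      fun ⟨⟨⟨hx0, hxN⟩, hc0, hcL⟩, hx⟩ ↦ ⟨by omega, hxN, by omega, hcL, hcoprime hx, hx⟩⟩
  rw [hS', Set.ncard_coe_finset, card_filter, sum_product]
  simp_rw [← card_filter, Ioc_filter_zpow_add_eq_card Units.val_injective hL]
  rw [sum_ite, sum_const_zero, add_zero, sum_const, smul_eq_mul,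
    ZMod.Ioc_zero_mul_filter_intCast_mem_card (p ^ e) m (Units.val '' zpowers u), hU, mul_assoc,
    Nat.mul_div_cancel' hL, sq, mul_assoc]

/-- The number of pairs `(x, c)` with `x ∈ {1, …, m·p^e}`, `c ∈ {1, …, m·p^(e-1)}`,
`p ∤ x`, and `g^(x-1+c) ≡ x (mod p^e)` is exactly `m²·p^(e-1)`. -/
theorem welch_count_pairs_mod_pe (p : ℕ) (hp : p.Prime) (hodd : p ≠ 2)
    (e : ℕ) (he : 1 ≤ e) (g : ℤ) (hg : ¬ (p : ℤ) ∣ g)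
    (m : ℕ) (hm : m = orderOf (g : ZMod p))
    (u : (ZMod (p ^ e))ˣ) (hu : (u : ZMod (p ^ e)) = (g : ZMod (p ^ e)))
    (S : Set (ℤ × ℤ))
    (hS : S = {xc : ℤ × ℤ | 1 ≤ xc.1 ∧ xc.1 ≤ (m : ℤ) * (p : ℤ) ^ e ∧
      1 ≤ xc.2 ∧ xc.2 ≤ (m : ℤ) * (p : ℤ) ^ (e - 1) ∧ ¬ (p : ℤ) ∣ xc.1 ∧
      (↑(u ^ (xc.1 - 1 + xc.2)) : ZMod (p ^ e)) = (xc.1 : ZMod (p ^ e))}) :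
    S.ncard = m ^ 2 * p ^ (e - 1) :=
  welch_count_pairs_mod_pe_general p hp e he g m hm u hu S hS
end

section
/- Let e ≥ 1, let g be an odd integer, and fix an integer c. Then there is exactly one integer x with 1 ≤ x ≤ 2^e satisfying g^(x-1+c) ≡ x (mod 2^e). -/
/-!
If `x` and `y` both solve the equation, then `d = x - y` satisfies `d ≡ w (g^d - 1) (mod 2^e)`
with `w = g^(y-1+c)`. Since `g` is odd, `2^j ∣ d` implies `2^(j+1) ∣ g^d - 1`, hence
`2^(j+1) ∣ d` as long as `j < e`; so `2^e ∣ d`. Thus `x ↦ x - g^(x-1+c)` is injective from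
`{1, …, 2^e}` to `ZMod (2^e)`, hence bijective, and the solutions are the preimages of `0`.
-/

theorem two_pow_succ_dvd_pow_two_pow_sub_one {R : Type*} [CommRing R] {a : R} (ha : 2 ∣ a - 1) :
    ∀ j : ℕ, 2 ^ (j + 1) ∣ a ^ 2 ^ j - 1
  | 0 => by simpa using ha
  | j + 1 => by
    have hfactor : a ^ 2 ^ (j + 1) - 1 = (a ^ 2 ^ j - 1) * ((a ^ 2 ^ j - 1) + 2) := by ring
    rw [hfactor, pow_succ]
    have ih := two_pow_succ_dvd_pow_two_pow_sub_one ha j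
    exact mul_dvd_mul ih (dvd_add ((dvd_pow_self 2 j.succ_ne_zero).trans ih) dvd_rfl)

theorem Units.val_sub_one_dvd_val_zpow_sub_one {R : Type*} [CommRing R] (u : Rˣ) :
    ∀ n : ℤ, (u : R) - 1 ∣ ((u ^ n : Rˣ) : R) - 1
  | (n : ℕ) => by simpa using sub_one_dvd_pow_sub_one (u : R) n
  | .negSucc n => by
    have h : ((u ^ Int.negSucc n : Rˣ) : R) - 1
        = -((u ^ Int.negSucc n : Rˣ) : R) * ((u : R) ^ (n + 1) - 1) := by
      rw [zpow_negSucc, ← Units.val_pow_eq_pow_val, neg_mul, mul_sub, ← Units.val_mul,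
        inv_mul_cancel, Units.val_one]
      ring
    rw [h]
    exact dvd_mul_of_dvd_right (sub_one_dvd_pow_sub_one _ _) _

theorem ZMod.natCast_dvd_of_natCast_dvd_intCast {a n : ℕ} (han : a ∣ n) {d : ℤ}
    (h : (a : ZMod n) ∣ (d : ZMod n)) : (a : ℤ) ∣ d := by
  have h' := map_dvd (ZMod.castHom han (ZMod a)) h
  rw [map_natCast, map_intCast, ZMod.natCast_self, zero_dvd_iff] at h'
  exact (ZMod.intCast_zmod_eq_zero_iff_dvd d a).mp h'

theorem two_pow_dvd_of_intCast_eq_mul_zpow_sub_one {e : ℕ} {u : (ZMod (2 ^ e))ˣ}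
    (hu : 2 ∣ (u : ZMod (2 ^ e)) - 1) {d : ℤ} {w : ZMod (2 ^ e)}
    (h : (d : ZMod (2 ^ e)) = w * (((u ^ d : (ZMod (2 ^ e))ˣ) : ZMod (2 ^ e)) - 1)) :
    2 ^ e ∣ d := by
  suffices ∀ j ≤ e, 2 ^ j ∣ d from this e le_rfl
  intro j
  induction j with
  | zero => simp
  | succ j ih =>
    intro hj
    obtain ⟨q, hq⟩ := ih (by omega)
    have hpow : (2 : ZMod (2 ^ e)) ^ (j + 1) ∣ ((u ^ d : (ZMod (2 ^ e))ˣ) : ZMod (2 ^ e)) - 1 := by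
      rw [hq, zpow_mul, show (2 : ℤ) ^ j = ((2 ^ j : ℕ) : ℤ) by push_cast; rfl, zpow_natCast]
      refine (two_pow_succ_dvd_pow_two_pow_sub_one hu j).trans ?_
      rw [← Units.val_pow_eq_pow_val]
      exact Units.val_sub_one_dvd_val_zpow_sub_one (u ^ 2 ^ j) q
    have hcast : ((2 ^ (j + 1) : ℕ) : ZMod (2 ^ e)) ∣ (d : ZMod (2 ^ e)) := by
      rw [h, Nat.cast_pow, Nat.cast_ofNat]
      exact dvd_mul_of_dvd_right hpow w
    exact_mod_cast ZMod.natCast_dvd_of_natCast_dvd_intCast (pow_dvd_pow 2 hj) hcast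

theorem ZMod.injOn_intCast_sub_zpow_Icc {e : ℕ} {u : (ZMod (2 ^ e))ˣ}
    (hu : 2 ∣ (u : ZMod (2 ^ e)) - 1) (s : ℤ) :
    Set.InjOn (fun x : ℤ ↦ (x : ZMod (2 ^ e)) - ((u ^ (x + s) : (ZMod (2 ^ e))ˣ) : ZMod (2 ^ e)))
      (Finset.Icc (1 : ℤ) (2 ^ e)) := by
  intro x hx y hy hxy
  simp only [Finset.coe_Icc, Set.mem_Icc] at hx hy
  have hdvd : 2 ^ e ∣ x - y := by
    refine two_pow_dvd_of_intCast_eq_mul_zpow_sub_one hu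
      (w := ((u ^ (y + s) : (ZMod (2 ^ e))ˣ) : ZMod (2 ^ e))) ?_
    rw [mul_sub, ← Units.val_mul, ← zpow_add, Int.cast_sub, mul_one,
      show y + s + (x - y) = x + s by ring]
    linear_combination hxy
  have hlt : |x - y| < 2 ^ e := abs_sub_lt_iff.mpr ⟨by linarith, by linarith⟩
  linarith [Int.eq_zero_of_abs_lt_dvd hdvd hlt]

theorem welch_mod_two_unique_solution_general (e : ℕ) (g : ℤ) (hg : Odd g)
    (c : ℤ) (u : (ZMod (2 ^ e))ˣ) (hu : (u : ZMod (2 ^ e)) = (g : ZMod (2 ^ e))) :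
    ∃! x : ℤ, 1 ≤ x ∧ x ≤ 2 ^ e ∧
      (↑(u ^ (x - 1 + c)) : ZMod (2 ^ e)) = (x : ZMod (2 ^ e)) := by
  have hu2 : 2 ∣ (u : ZMod (2 ^ e)) - 1 := by
    obtain ⟨k, rfl⟩ := hg
    exact ⟨k, by rw [hu]; push_cast; ring⟩
  set F : ℤ → ZMod (2 ^ e) :=
    fun x ↦ (x : ZMod (2 ^ e)) - ((u ^ (x + (c - 1)) : (ZMod (2 ^ e))ˣ) : ZMod (2 ^ e))
  have hF : ∀ x : ℤ, (↑(u ^ (x - 1 + c)) : ZMod (2 ^ e)) = (x : ZMod (2 ^ e)) ↔ F x = 0 := by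
    intro x
    rw [sub_eq_zero, eq_comm, sub_add_eq_add_sub, ← add_sub_assoc]
  have hinj : Set.InjOn F (Finset.Icc (1 : ℤ) (2 ^ e)) :=
    ZMod.injOn_intCast_sub_zpow_Icc hu2 (c - 1)
  have hsurj := Finset.surjOn_of_injOn_of_card_le F (t := Finset.univ) (by simp) hinj (by simp)
  obtain ⟨x, hx, hFx⟩ := hsurj (Finset.mem_univ 0)
  simp only [Finset.coe_Icc, Set.mem_Icc] at hx
  refine ⟨x, ⟨hx.1, hx.2, (hF x).mpr hFx⟩, fun y ⟨hy1, hy2, hy⟩ ↦ ?_⟩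
  exact hinj (by simp [hy1, hy2]) (by simp [hx]) (((hF y).mp hy).trans hFx.symm)

/-- For `g` odd and fixed `c`, there is exactly one `x ∈ {1, …, 2^e}` with
`g^(x-1+c) ≡ x (mod 2^e)`. -/
theorem welch_mod_two_unique_solution (e : ℕ) (he : 1 ≤ e) (g : ℤ) (hg : Odd g)
    (c : ℤ) (u : (ZMod (2 ^ e))ˣ) (hu : (u : ZMod (2 ^ e)) = (g : ZMod (2 ^ e))) :
    ∃! x : ℤ, 1 ≤ x ∧ x ≤ 2 ^ e ∧
      (↑(u ^ (x - 1 + c)) : ZMod (2 ^ e)) = (x : ZMod (2 ^ e)) :=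
  welch_mod_two_unique_solution_general e g hg c u hu
end
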